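/- arXiv:2605.31333 — 2 statements merged into one kernel-verified Lean document; each statement's English description precedes it below -/
import Mathlib

section
/- Let (c_u)_{u∈ℤ} be the (n-periodic) quiddity of a triangulation of a convex n-gon, and for a sequence define M(a_1,…,a_k) = ∏_{t=1}^{k} [[a_t, −1],[1, 0]] as a product of 2×2 integer matrices. Then for any i, M(c_i, c_{i+1}, …, c_{i+n−1}) = −I, where I is the 2×2 identity matrix. -/
open Polynomial

open scoped Classical

namespace CCFPaper

/-- `a` and `b` are joined by an edge of the convex `n`-gon with vertices
`v_0, …, v_{n-1}` in cyclic order. -/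
def isEdge (n : ℕ) (a b : Fin n) : Prop :=
  b.val = a.val + 1 ∨ a.val = b.val + 1 ∨ (a.val = 0 ∧ b.val + 1 = n) ∨
    (b.val = 0 ∧ a.val + 1 = n)

/-- `p` represents a diagonal of the convex `n`-gon: its endpoints are listed in
increasing order and are not adjacent on the polygon. -/
def IsDiagPair (n : ℕ) (p : Fin n × Fin n) : Prop :=
  p.1.val + 2 ≤ p.2.val ∧ ¬(p.1.val = 0 ∧ p.2.val + 1 = n)

/-- Two diagonals (with endpoints listed in increasing order) cross in the interior of
the convex polygon. -/
def Crosses {n : ℕ} (p q : Fin n × Fin n) : Prop :=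
  (p.1.val < q.1.val ∧ q.1.val < p.2.val ∧ p.2.val < q.2.val) ∨
    (q.1.val < p.1.val ∧ p.1.val < q.2.val ∧ q.2.val < p.2.val)

/-- A triangulation of a convex `n`-gon: a maximal family (i.e. one of cardinality
`n - 3`) of pairwise non-crossing diagonals. -/
structure Triangulation (n : ℕ) where
  diag : Finset (Fin n × Fin n)
  diag_mem : ∀ p ∈ diag, IsDiagPair n p
  card_diag : diag.card = n - 3
  noncross : ∀ p ∈ diag, ∀ q ∈ diag, ¬ Crosses p q

/-- `a b` is a side of the triangulation: an edge of the polygon or a diagonal. -/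
def Triangulation.IsSide {n : ℕ} (T : Triangulation n) (a b : Fin n) : Prop :=
  isEdge n a b ∨ (a, b) ∈ T.diag ∨ (b, a) ∈ T.diag

/-- The cells (triangles) of a triangulation: triples of vertices, listed in increasing
order, that are pairwise joined by sides. -/
noncomputable def Triangulation.cells {n : ℕ} (T : Triangulation n) :
    Finset (Fin n × Fin n × Fin n) :=
  Finset.univ.filter fun t =>
    t.1.val < t.2.1.val ∧ t.2.1.val < t.2.2.val ∧
      T.IsSide t.1 t.2.1 ∧ T.IsSide t.2.1 t.2.2 ∧ T.IsSide t.1 t.2.2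

/-- The quiddity entry at a vertex: the number of cells incident to it. -/
noncomputable def Triangulation.quidFin {n : ℕ} (T : Triangulation n) (u : Fin n) : ℕ :=
  (T.cells.filter fun t => t.1 = u ∨ t.2.1 = u ∨ t.2.2 = u).card

/-- The vertex `v_u` for `u : ℤ`, via reduction mod `n`. -/
def vmap (n : ℕ) [NeZero n] (u : ℤ) : Fin n :=
  ⟨(u % (n : ℤ)).toNat, by
    have hn : (0 : ℤ) < (n : ℤ) := by
      exact_mod_cast Nat.pos_of_ne_zero (NeZero.ne n)
    have h1 : 0 ≤ u % (n : ℤ) := Int.emod_nonneg u (by omega)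
    have h2 : u % (n : ℤ) < (n : ℤ) := Int.emod_lt_of_pos u hn
    omega⟩

/-- The `n`-periodic quiddity sequence of a triangulation, indexed by `ℤ`. -/
noncomputable def Triangulation.quid {n : ℕ} [NeZero n] (T : Triangulation n) (u : ℤ) : ℕ :=
  T.quidFin (vmap n u)

/-- The `q`-integer `[a]_q = 1 + q + ⋯ + q^{a-1}` in `ℤ[q]`. -/
noncomputable def qInt (a : ℕ) : Polynomial ℤ :=
  ∑ t ∈ Finset.range a, X ^ t

/-- The `q`-deformed elementary matrix `M_q(a) = [[[a]_q, -q^{a-1}], [1, 0]]`. -/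
noncomputable def Mq (a : ℕ) : Matrix (Fin 2) (Fin 2) (Polynomial ℤ) :=
  !![qInt a, -(X ^ (a - 1)); 1, 0]

/-- The elementary matrix `M(a) = [[a, -1], [1, 0]]`. -/
def Mmat (a : ℤ) : Matrix (Fin 2) (Fin 2) ℤ := !![a, -1; 1, 0]

/-- The ordered product `M(c_i) M(c_{i+1}) ⋯ M(c_{i+k-1})`. -/
def MprodZ (c : ℤ → ℤ) (i : ℤ) (k : ℕ) : Matrix (Fin 2) (Fin 2) ℤ :=
  ((List.range k).map fun t => Mmat (c (i + t))).prod

/-- The ordered product `M_q(c_i) M_q(c_{i+1}) ⋯ M_q(c_{i+k-1})`. -/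
noncomputable def MqProd (c : ℤ → ℕ) (i : ℤ) (k : ℕ) :
    Matrix (Fin 2) (Fin 2) (Polynomial ℤ) :=
  ((List.range k).map fun t => Mq (c (i + t))).prod

/-- The `q`-deformed Conway–Coxeter frieze entries `ζ_{k, k+m}`, defined by
`ζ_{k,k} = 0`, `ζ_{k,k+1} = 1` and the recurrence
`ζ_{k,ℓ+1} = [c_ℓ]_q ζ_{k,ℓ} - q^{c_{ℓ-1}-1} ζ_{k,ℓ-1}`. -/
noncomputable def zetaNat (c : ℤ → ℕ) (k : ℤ) : ℕ → Polynomial ℤ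
  | 0 => 0
  | 1 => 1
  | m + 2 =>
      qInt (c (k + m + 1)) * zetaNat c k (m + 1) - X ^ (c (k + m) - 1) * zetaNat c k m

/-- The `q`-CCF entry `ζ_{k,ℓ}` (junk value `0` for `ℓ < k`). -/
noncomputable def zetaI (c : ℤ → ℕ) (k l : ℤ) : Polynomial ℤ :=
  zetaNat c k (l - k).toNat

/-- The classical Conway–Coxeter frieze entries `σ_{k, k+m}`, with `σ_{k,k} = 0`,
`σ_{k,k+1} = 1`, and `σ_{k,ℓ+1} = c_ℓ σ_{k,ℓ} - σ_{k,ℓ-1}`. -/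
def sigmaNat (c : ℤ → ℕ) (k : ℤ) : ℕ → ℤ
  | 0 => 0
  | 1 => 1
  | m + 2 => (c (k + m + 1) : ℤ) * sigmaNat c k (m + 1) - sigmaNat c k m

/-- The CCF entry `σ_{k,ℓ}` (junk value `0` for `ℓ < k`). -/
def sigmaI (c : ℤ → ℕ) (k l : ℤ) : ℤ :=
  sigmaNat c k (l - k).toNat

/-- `ν^tri_{k,m}`: the number of pairs `(a, b)` with `k ≤ a`, `a + 2 ≤ b ≤ m`, and
`σ_{a,b} = 1`. -/
noncomputable def nuTri (c : ℤ → ℕ) (k m : ℤ) : ℕ :=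
  (((Finset.range (m - k + 1).toNat) ×ˢ (Finset.range (m - k + 1).toNat)).filter fun st =>
    st.1 + 2 ≤ st.2 ∧ sigmaI c (k + st.1) (k + st.2) = 1).card

/-- `ν^rec_{i,j,m}`: the number of pairs `(a, b)` with `i ≤ a ≤ j`, `j + 2 ≤ b ≤ m`, and
`σ_{a,b} = 1`. -/
noncomputable def nuRec (c : ℤ → ℕ) (i j m : ℤ) : ℕ :=
  (((Finset.range (j - i + 1).toNat) ×ˢ (Finset.range (m - j - 1).toNat)).filter fun st =>
    sigmaI c (i + st.1) (j + 2 + st.2) = 1).card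

/-- The image of an integer polynomial in the field `ℚ(q)` of rational functions. -/
noncomputable def ratq (p : Polynomial ℤ) : RatFunc ℚ :=
  algebraMap (Polynomial ℚ) (RatFunc ℚ) (p.map (Int.castRingHom ℚ))

/-- The `q`-deformed continued fraction `[[c_i, …, c_{i+m}]]_q`, computed in `ℚ(q)`:
`cfq c m i = [c_i]_q - q^{c_i - 1} / cfq c (m-1) (i+1)`. -/
noncomputable def cfq (c : ℤ → ℕ) : ℕ → ℤ → RatFunc ℚ
  | 0, i => ratq (qInt (c i))
  | m + 1, i => ratq (qInt (c i)) - ratq (X ^ (c i - 1)) / cfq c m (i + 1)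

/-!
Induction on `n`, cutting off an ear. A shortest diagonal `(A, B)` of a triangulation has no
diagonal at `A + 1`, since such a diagonal would cross `(A, B)` or be shorter. Hence
`B = A + 2`: otherwise `(A, A + 2)` could be added, while non-crossing diagonals of an `n`-gon
number at most `n - 3` (split along one of them and induct). Deleting the vertex `u = A + 1`
leaves a triangulation of the `(n - 1)`-gon whose quiddity `(…, a, b, …)` is obtained from
`(…, a + 1, 1, b + 1, …)`, and `M(a + 1) M(1) M(b + 1) = M(a) M(b)`. The triangle has quiddity
`(1, 1, 1)` and `M(1)³ = -I`. Finally, by periodicity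
`M(c_i) M(c_{i+1}, …, c_{i+n}) = M(c_i, …, c_{i+n-1}) M(c_i)`, and `-I` is central, so the
starting index does not matter.
-/

lemma val_succAbove {m : ℕ} (u : Fin (m + 1)) (w : Fin m) :
    (u.succAbove w).val = if w.val < u.val then w.val else w.val + 1 := by
  unfold Fin.succAbove
  split_ifs <;> simp_all [Fin.lt_def]

-- `MprodZ` coerces `List.range k` to a list of integers; this restates it over `ℕ`.
lemma MprodZ_eq_prod_map_range (c : ℤ → ℤ) (i : ℤ) (k : ℕ) :
    MprodZ c i k = ((List.range k).map fun t : ℕ => Mmat (c (i + t))).prod := by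
  simp only [MprodZ, List.pure_def, List.bind_eq_flatMap, ← List.map_eq_flatMap, List.map_map]
  rfl

lemma MprodZ_add (c : ℤ → ℤ) (i : ℤ) (k l : ℕ) :
    MprodZ c i (k + l) = MprodZ c i k * MprodZ c (i + k) l := by
  simp only [MprodZ_eq_prod_map_range, List.range_add, List.map_append, List.prod_append,
    List.map_map]
  congr 3
  ext t
  simp [add_assoc]

@[simp] lemma MprodZ_one (c : ℤ → ℤ) (i : ℤ) : MprodZ c i 1 = Mmat (c i) := by
  simp [MprodZ_eq_prod_map_range]

lemma MprodZ_congr {c c' : ℤ → ℤ} {i j : ℤ} {k : ℕ}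
    (h : ∀ t < k, c (i + t) = c' (j + t)) :
    MprodZ c i k = MprodZ c' j k := by
  simp only [MprodZ_eq_prod_map_range]
  congr 1
  exact List.map_congr_left fun t ht => by rw [h t (List.mem_range.mp ht)]

lemma Mmat_isUnit (a : ℤ) : IsUnit (Mmat a) := by
  simp [Matrix.isUnit_iff_isUnit_det, Mmat, Matrix.det_fin_two]

lemma Mmat_mul_Mmat_one_mul_Mmat (a b : ℤ) :
    Mmat a * Mmat 1 * Mmat b = Mmat (a - 1) * Mmat (b - 1) := by
  ext i j
  fin_cases i <;> fin_cases j <;> simp [Mmat, Matrix.mul_apply, Fin.sum_univ_two] <;> ring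

lemma Mmat_one_mul_Mmat_one_mul_Mmat_one : Mmat 1 * Mmat 1 * Mmat 1 = -1 := by
  decide

lemma MprodZ_two (c : ℤ → ℤ) (i : ℤ) : MprodZ c i 2 = Mmat (c i) * Mmat (c (i + 1)) := by
  simpa using MprodZ_add c i 1 1

lemma MprodZ_three (c : ℤ → ℤ) (i : ℤ) :
    MprodZ c i 3 = Mmat (c i) * Mmat (c (i + 1)) * Mmat (c (i + 2)) := by
  simpa [MprodZ_two, add_assoc] using MprodZ_add c i 2 1

lemma Mmat_mul_MprodZ_add_one {c : ℤ → ℤ} {n : ℕ} (hc : Function.Periodic c n) (i : ℤ) :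
    Mmat (c i) * MprodZ c (i + 1) n = MprodZ c i n * Mmat (c i) :=
  calc Mmat (c i) * MprodZ c (i + 1) n = MprodZ c i (1 + n) := by
        rw [MprodZ_add, MprodZ_one, Nat.cast_one]
    _ = MprodZ c i (n + 1) := by rw [add_comm]
    _ = MprodZ c i n * Mmat (c i) := by rw [MprodZ_add, MprodZ_one, hc]

lemma MprodZ_add_one_eq_neg_one_iff {c : ℤ → ℤ} {n : ℕ} (hc : Function.Periodic c n)
    (i : ℤ) :
    MprodZ c (i + 1) n = -1 ↔ MprodZ c i n = -1 := by
  have key := Mmat_mul_MprodZ_add_one hc i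
  constructor
  · intro h
    rw [h, mul_neg_one] at key
    exact (Mmat_isUnit (c i)).mul_right_cancel (by rw [← key, neg_one_mul])
  · intro h
    rw [h, neg_one_mul] at key
    exact (Mmat_isUnit (c i)).mul_left_cancel (by rw [key, mul_neg_one])

lemma MprodZ_eq_neg_one_of_periodic {c : ℤ → ℤ} {n : ℕ} (hc : Function.Periodic c n)
    (h₀ : MprodZ c 0 n = -1) (i : ℤ) : MprodZ c i n = -1 := by
  induction i using Int.induction_on with
  | zero => exact h₀
  | succ k hk => exact (MprodZ_add_one_eq_neg_one_iff hc k).2 hk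
  | pred k hk => exact (MprodZ_add_one_eq_neg_one_iff hc (-k - 1)).1 (by simpa using hk)

lemma MprodZ_insert_one {c c' : ℤ → ℤ} {k r : ℕ}
    (hhead : ∀ t < k, c t = c' t) (hleft : c k = c' k + 1) (hone : c (k + 1) = 1)
    (hright : c (k + 2) = c' (k + 1) + 1) (htail : ∀ t < r, c (k + 3 + t) = c' (k + 2 + t)) :
    MprodZ c 0 (k + 3 + r) = MprodZ c' 0 (k + 2 + r) := by
  rw [MprodZ_add, MprodZ_add, MprodZ_add c' 0 (k + 2), MprodZ_add c' 0 k, MprodZ_three,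
    MprodZ_two]
  simp only [zero_add, Nat.cast_add, Nat.cast_ofNat]
  rw [hleft, hone, hright, Mmat_mul_Mmat_one_mul_Mmat, add_sub_cancel_right,
    add_sub_cancel_right, MprodZ_congr (j := 0) (by simpa using hhead),
    MprodZ_congr (j := k + 2) htail]

lemma MprodZ_succ_eq_of_succAbove {m : ℕ} {c c' : ℤ → ℤ} {u : Fin (m + 1)}
    (hu₀ : 0 < u.val) (hum : u.val < m) (hone : c u = 1)
    (h : ∀ w : Fin m,
      c (u.succAbove w) = c' w + if w.val + 1 = u.val ∨ w.val = u.val then 1 else 0) :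
    MprodZ c 0 (m + 1) = MprodZ c' 0 m := by
  obtain ⟨k, hk⟩ : ∃ k, u.val = k + 1 := ⟨u.val - 1, by omega⟩
  obtain ⟨r, rfl⟩ : ∃ r, m = k + 2 + r := ⟨m - k - 2, by omega⟩
  have h' : ∀ t < k + 2 + r, c (if t < k + 1 then t else t + 1 : ℕ) =
      c' t + if t + 1 = k + 1 ∨ t = k + 1 then 1 else 0 := fun t ht => by
    simpa only [val_succAbove, hk] using h ⟨t, ht⟩
  rw [show k + 2 + r + 1 = k + 3 + r by omega]
  apply MprodZ_insert_one
  · intro t ht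
    have := h' t (by omega)
    rwa [if_pos (by omega), if_neg (by omega), add_zero] at this
  · have := h' k (by omega)
    rwa [if_pos (by omega), if_pos (by omega)] at this
  · simpa [hk] using hone
  · have := h' (k + 1) (by omega)
    rw [if_neg (by omega), if_pos (by omega)] at this
    convert this using 2 <;> push_cast <;> ring
  · intro t ht
    have := h' (k + 2 + t) (by omega)
    rw [if_neg (by omega), if_neg (by omega), add_zero] at this
    convert this using 2 <;> push_cast <;> ring

lemma crosses_map_iff {m n : ℕ} {f : Fin m → Fin n} (hf : StrictMono f) (p q : Fin m × Fin m) :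
    Crosses (Prod.map f f p) (Prod.map f f q) ↔ Crosses p q := by
  simp only [Crosses, Prod.map_fst, Prod.map_snd, ← Fin.lt_def, hf.lt_iff_lt]

lemma card_preimage_prodMap {α β : Type*} {f : α → β} (hf : Function.Injective f)
    {D : Finset (β × β)} (hD : ∀ p ∈ D, p.1 ∈ Set.range f ∧ p.2 ∈ Set.range f) :
    (D.preimage (Prod.map f f) (hf.prodMap hf).injOn).card = D.card := by
  rw [Finset.card_preimage, Finset.filter_true_of_mem]
  intro p hp
  rw [Set.range_prodMap]
  exact hD p hp

def IsDissection (n : ℕ) (D : Finset (Fin n × Fin n)) : Prop :=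
  (∀ p ∈ D, IsDiagPair n p) ∧ ∀ p ∈ D, ∀ q ∈ D, ¬ Crosses p q

lemma Triangulation.isDissection {n : ℕ} (T : Triangulation n) : IsDissection n T.diag :=
  ⟨T.diag_mem, T.noncross⟩

namespace IsDissection

variable {m n : ℕ} {D : Finset (Fin n × Fin n)}

lemma mono (hD : IsDissection n D) {D' : Finset (Fin n × Fin n)} (h : D' ⊆ D) :
    IsDissection n D' :=
  ⟨fun p hp => hD.1 p (h hp), fun p hp q hq => hD.2 p (h hp) q (h hq)⟩

lemma preimage (hD : IsDissection n D) {f : Fin m → Fin n} (hf : StrictMono f)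
    (hdiag : ∀ q : Fin m × Fin m, Prod.map f f q ∈ D → IsDiagPair m q) :
    IsDissection m (D.preimage (Prod.map f f) (hf.injective.prodMap hf.injective).injOn) := by
  refine ⟨fun q hq => hdiag q (Finset.mem_preimage.1 hq), fun p hp q hq hpq => ?_⟩
  rw [Finset.mem_preimage] at hp hq
  exact hD.2 _ hp _ hq ((crosses_map_iff hf p q).2 hpq)

lemma insert (hD : IsDissection n D) {e : Fin n × Fin n} (he : IsDiagPair n e)
    (hcross : ∀ p ∈ D, ¬ Crosses e p ∧ ¬ Crosses p e) : IsDissection n (insert e D) := by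
  have hself : ¬ Crosses e e := by simp [Crosses]
  refine ⟨fun p hp => ?_, fun p hp q hq => ?_⟩
  · rcases Finset.mem_insert.1 hp with rfl | hp
    exacts [he, hD.1 p hp]
  · rcases Finset.mem_insert.1 hp with rfl | hp' <;> rcases Finset.mem_insert.1 hq with rfl | hq'
    exacts [hself, (hcross q hq').1, (hcross p hp').2, hD.2 p hp' q hq']

lemma endpoints_outside (hD : IsDissection n D) {p q : Fin n × Fin n} (hp : p ∈ D)
    (hq : q ∈ D) (hout : ¬ (p.1.val ≤ q.1.val ∧ q.2.val ≤ p.2.val)) :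
    (q.1.val ≤ p.1.val ∨ p.2.val ≤ q.1.val) ∧
      (q.2.val ≤ p.1.val ∨ p.2.val ≤ q.2.val) := by
  have h₁ := hD.2 q hq p hp
  have h₂ := hD.2 p hp q hq
  have hgap := (hD.1 q hq).1
  simp only [Crosses] at h₁ h₂
  omega

/-- The diagonals of `D` lying in the sub-polygon `v_A, …, v_B` cut off by `(A, B) ∈ D`,
other than `(A, B)` itself, form a dissection of that `(B - A + 1)`-gon. -/
lemma exists_inside (hD : IsDissection n D) {p : Fin n × Fin n} (hp : p ∈ D) :
    ∃ D' : Finset (Fin (p.2.val - p.1.val + 1) × Fin (p.2.val - p.1.val + 1)),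
      IsDissection _ D' ∧
        (D.filter fun q => p.1.val ≤ q.1.val ∧ q.2.val ≤ p.2.val).card = D'.card + 1 := by
  set A := p.1.val
  set B := p.2.val
  have hBn : B < n := p.2.isLt
  let f : Fin (B - A + 1) → Fin n := fun x => ⟨A + x.val, by omega⟩
  have hf : StrictMono f := fun x y h => Fin.mk_lt_mk.2 (Nat.add_lt_add_left h A)
  set D₁ := (D.filter fun q => A ≤ q.1.val ∧ q.2.val ≤ B).erase p
  have hD₁ : ∀ q ∈ D₁, q ≠ p ∧ q ∈ D ∧ A ≤ q.1.val ∧ q.2.val ≤ B := by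
    intro q hq
    simpa [D₁, and_assoc] using hq
  have hgap := (hD.1 p hp).1
  refine ⟨D₁.preimage (Prod.map f f) (hf.injective.prodMap hf.injective).injOn,
    (hD.mono ((Finset.erase_subset _ _).trans (Finset.filter_subset _ _))).preimage hf ?_, ?_⟩
  · intro q hq
    obtain ⟨hne, hqD, -⟩ := hD₁ _ hq
    have hgap' := (hD.1 _ hqD).1
    simp only [f, Prod.map_fst, Prod.map_snd] at hgap'
    refine ⟨by omega, fun ⟨h₁, h₂⟩ => hne ?_⟩
    exact Prod.ext (Fin.ext (by simp [f, A, h₁])) (Fin.ext (by simp [f]; omega))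
  · rw [card_preimage_prodMap hf.injective,
      Finset.card_erase_add_one (Finset.mem_filter.2 ⟨hp, le_rfl, le_rfl⟩)]
    intro q hq
    obtain ⟨-, hqD, h₁, h₂⟩ := hD₁ q hq
    have hgap' := (hD.1 _ hqD).1
    exact ⟨⟨⟨q.1.val - A, by omega⟩, Fin.ext (by simp [f]; omega)⟩,
      ⟨⟨q.2.val - A, by omega⟩, Fin.ext (by simp [f]; omega)⟩⟩

/-- The diagonals of `D` outside the sub-polygon cut off by `(A, B) ∈ D` form a dissection of
the `(n - (B - A - 1))`-gon obtained by deleting the vertices strictly between `v_A` and `v_B`. -/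
lemma exists_outside (hD : IsDissection n D) {p : Fin n × Fin n} (hp : p ∈ D) :
    ∃ D' : Finset (Fin (n - (p.2.val - p.1.val - 1)) × Fin (n - (p.2.val - p.1.val - 1))),
      IsDissection _ D' ∧
        (D.filter fun q => ¬ (p.1.val ≤ q.1.val ∧ q.2.val ≤ p.2.val)).card = D'.card := by
  set A := p.1.val
  set B := p.2.val
  have hBn : B < n := p.2.isLt
  let f : Fin (n - (B - A - 1)) → Fin n := fun x =>
    ⟨if x.val ≤ A then x.val else x.val + (B - A - 1), by split_ifs <;> omega⟩
  have hfval : ∀ x, (f x).val = if x.val ≤ A then x.val else x.val + (B - A - 1) := fun _ => rfl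
  have hf : StrictMono f := fun x y h => by
    rw [Fin.lt_def] at h ⊢
    rw [hfval, hfval]
    split_ifs <;> omega
  have hrange : ∀ v : Fin n, v.val ≤ A ∨ B ≤ v.val → v ∈ Set.range f := by
    intro v hv
    by_cases h : v.val ≤ A
    · exact ⟨⟨v.val, by omega⟩, Fin.ext (by rw [hfval]; simp [h])⟩
    · refine ⟨⟨v.val - (B - A - 1), by omega⟩, Fin.ext ?_⟩
      rw [hfval]
      dsimp only
      split_ifs <;> omega
  set D₂ := D.filter fun q => ¬ (A ≤ q.1.val ∧ q.2.val ≤ B)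
  have hD₂ : ∀ q ∈ D₂, q ∈ D ∧ ¬ (A ≤ q.1.val ∧ q.2.val ≤ B) ∧
      (q.1.val ≤ A ∨ B ≤ q.1.val) ∧ (q.2.val ≤ A ∨ B ≤ q.2.val) := by
    intro q hq
    obtain ⟨hqD, hout⟩ := Finset.mem_filter.1 hq
    exact ⟨hqD, hout, hD.endpoints_outside hp hqD hout⟩
  refine ⟨D₂.preimage (Prod.map f f) (hf.injective.prodMap hf.injective).injOn,
    (hD.mono (Finset.filter_subset _ _)).preimage hf ?_, ?_⟩
  · intro q hq
    obtain ⟨hqD, hout, -⟩ := hD₂ _ hq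
    obtain ⟨hgap', hwrap⟩ := hD.1 _ hqD
    simp only [Prod.map_fst, Prod.map_snd, hfval] at hgap' hwrap hout
    constructor <;> split_ifs at hgap' hwrap hout <;> omega
  · rw [card_preimage_prodMap hf.injective]
    intro q hq
    obtain ⟨-, -, h₁, h₂⟩ := hD₂ q hq
    exact ⟨hrange _ h₁, hrange _ h₂⟩

theorem card_le :
    ∀ {n : ℕ} {D : Finset (Fin n × Fin n)}, IsDissection n D → D.card ≤ n - 3 := by
  intro n
  induction n using Nat.strong_induction_on with
  | _ n IH =>
  intro D hD
  rcases D.eq_empty_or_nonempty with rfl | ⟨p, hp⟩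
  · simp
  obtain ⟨hgap, hwrap⟩ := hD.1 p hp
  have hBn : p.2.val < n := p.2.isLt
  obtain ⟨D₁, hD₁, hcard₁⟩ := hD.exists_inside hp
  obtain ⟨D₂, hD₂, hcard₂⟩ := hD.exists_outside hp
  have h₁ := IH _ (by omega) hD₁
  have h₂ := IH _ (by omega) hD₂
  have hsplit := Finset.card_filter_add_card_filter_not
    (s := D) (p := fun q => p.1.val ≤ q.1.val ∧ q.2.val ≤ p.2.val)
  omega

end IsDissection

namespace Triangulation

lemma mem_cells_iff {n : ℕ} (T : Triangulation n) (t : Fin n × Fin n × Fin n) :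
    t ∈ T.cells ↔ t.1 < t.2.1 ∧ t.2.1 < t.2.2 ∧
      T.IsSide t.1 t.2.1 ∧ T.IsSide t.2.1 t.2.2 ∧ T.IsSide t.1 t.2.2 := by
  simp [cells]

lemma exists_ear {n : ℕ} (T : Triangulation n) (hn : 4 ≤ n) :
    ∃ u : Fin n, ∃ e ∈ T.diag, e.1.val + 1 = u.val ∧ e.2.val = u.val + 1 ∧
      ∀ p ∈ T.diag, p.1 ≠ u ∧ p.2 ≠ u := by
  have hne : T.diag.Nonempty := by
    rw [← Finset.card_pos, T.card_diag]
    omega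
  obtain ⟨q, hq, hmin⟩ := T.diag.exists_min_image (fun p => p.2.val - p.1.val) hne
  obtain ⟨hgap, hwrap⟩ := T.diag_mem q hq
  have hBn : q.2.val < n := q.2.isLt
  have hfree : ∀ p ∈ T.diag, p.1.val ≠ q.1.val + 1 ∧ p.2.val ≠ q.1.val + 1 := by
    intro p hp
    have h₁ := T.noncross p hp q hq
    have h₂ := T.noncross q hq p hp
    have hm := hmin p hp
    have hpgap := (T.diag_mem p hp).1
    simp only [Crosses] at h₁ h₂
    omega
  by_cases h : q.2.val = q.1.val + 2
  · refine ⟨⟨q.1.val + 1, by omega⟩, q, hq, rfl, h, fun p hp => ?_⟩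
    simp only [ne_eq, Fin.ext_iff]
    exact hfree p hp
  exfalso
  let e : Fin n × Fin n := (q.1, ⟨q.1.val + 2, by omega⟩)
  have he : e ∉ T.diag := fun he => by
    have := hmin e he
    simp only [e] at this
    omega
  have hD := T.isDissection.insert (e := e) ⟨by simp [e], by simp only [e]; omega⟩
    fun p hp => by
      have := hfree p hp
      simp only [Crosses, e]
      omega
  have := hD.card_le
  rw [Finset.card_insert_of_notMem he, T.card_diag] at this
  omega

section Ear

variable {n : ℕ} (T : Triangulation n) {u : Fin n} {e : Fin n × Fin n}

lemma isEdge_of_isSide (hfree : ∀ p ∈ T.diag, p.1 ≠ u ∧ p.2 ≠ u) {x y : Fin n}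
    (h : T.IsSide x y) (hxy : x = u ∨ y = u) : isEdge n x y := by
  rcases h with h | h | h
  · exact h
  · have := hfree _ h
    tauto
  · have := hfree _ h
    tauto

lemma filter_cells_eq_singleton_of_ear (he : e ∈ T.diag) (he₁ : e.1.val + 1 = u.val)
    (he₂ : e.2.val = u.val + 1) (hfree : ∀ p ∈ T.diag, p.1 ≠ u ∧ p.2 ≠ u) :
    T.cells.filter (fun t => t.1 = u ∨ t.2.1 = u ∨ t.2.2 = u) = {(e.1, u, e.2)} := by
  have hen : e.2.val < n := e.2.isLt
  ext t
  simp only [Finset.mem_filter, mem_cells_iff, Finset.mem_singleton]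
  constructor
  · rintro ⟨⟨h₁, h₂, s₁, s₂, s₃⟩, hu⟩
    have k₁ := T.isEdge_of_isSide hfree s₁
    have k₂ := T.isEdge_of_isSide hfree s₂
    have k₃ := T.isEdge_of_isSide hfree s₃
    simp only [isEdge, Fin.ext_iff, Fin.lt_def] at k₁ k₂ k₃ h₁ h₂ hu
    ext <;> simp only <;> omega
  · rintro rfl
    refine ⟨⟨?_, ?_, Or.inl ?_, Or.inl ?_, Or.inr (Or.inl he)⟩, Or.inr (Or.inl rfl)⟩ <;>
      simp only [isEdge, Fin.lt_def] <;> omega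

end Ear

lemma mem_cells_map_iff {m n : ℕ} (T : Triangulation n) (T' : Triangulation m)
    {f : Fin m → Fin n} (hf : StrictMono f)
    (hside : ∀ a b, a < b → (T'.IsSide a b ↔ T.IsSide (f a) (f b)))
    (t : Fin m × Fin m × Fin m) : Prod.map f (Prod.map f f) t ∈ T.cells ↔ t ∈ T'.cells := by
  simp only [mem_cells_iff, Prod.map_fst, Prod.map_snd, hf.lt_iff_lt]
  refine and_congr_right fun h₁ => and_congr_right fun h₂ => ?_
  rw [hside _ _ h₁, hside _ _ h₂, hside _ _ (h₁.trans h₂)]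

/-- `T'` is made of the diagonals of `T` other than `e`, which becomes a polygon edge once `u`
is deleted. -/
lemma exists_isSide_succAbove_iff {m : ℕ} (T : Triangulation (m + 1)) {u : Fin (m + 1)}
    {e : Fin (m + 1) × Fin (m + 1)} (he : e ∈ T.diag) (he₁ : e.1.val + 1 = u.val)
    (he₂ : e.2.val = u.val + 1) (hfree : ∀ p ∈ T.diag, p.1 ≠ u ∧ p.2 ≠ u) :
    ∃ T' : Triangulation m, ∀ a b : Fin m,
      a < b → (T'.IsSide a b ↔ T.IsSide (u.succAbove a) (u.succAbove b)) := by
  set s := u.succAbove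
  have hs : StrictMono s := Fin.strictMono_succAbove u
  have hsval : ∀ w, (s w).val = if w.val < u.val then w.val else w.val + 1 := val_succAbove u
  have hum : u.val < m := by have := e.2.isLt; omega
  have hmem : ∀ a b : Fin m, (s a, s b) = e ↔ a.val + 1 = u.val ∧ b.val = u.val := by
    intro a b
    simp only [Prod.ext_iff, Fin.ext_iff, hsval]
    split_ifs <;> omega
  have hD := (T.isDissection.mono (Finset.erase_subset e T.diag)).preimage hs fun q hq => by
    obtain ⟨hne, hqD⟩ := Finset.mem_erase.1 hq
    obtain ⟨hgap, hwrap⟩ := T.diag_mem _ hqD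
    rw [Prod.map, ne_eq, hmem] at hne
    simp only [Prod.map_fst, Prod.map_snd, hsval] at hgap hwrap
    constructor <;> split_ifs at hgap hwrap <;> omega
  refine ⟨⟨_, hD.1, ?_, hD.2⟩, fun a b hab => ?_⟩
  · rw [card_preimage_prodMap hs.injective, Finset.card_erase_of_mem he, T.card_diag]
    · omega
    · intro p hp
      simp only [s, Fin.range_succAbove]
      exact hfree p (Finset.mem_of_mem_erase hp)
  rw [Fin.lt_def] at hab
  by_cases hab' : a.val + 1 = u.val ∧ b.val = u.val
  · refine iff_of_true (Or.inl (Or.inl (by omega))) (Or.inr (Or.inl ?_))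
    rwa [(hmem a b).2 hab']
  have hne : (s a, s b) ≠ e := fun h => hab' ((hmem a b).1 h)
  have hne' : (s b, s a) ≠ e := fun h => by have := (hmem b a).1 h; omega
  have hedge : isEdge m a b ↔ isEdge (m + 1) (s a) (s b) := by
    have ha := hsval a
    have hb := hsval b
    simp only [isEdge]
    split_ifs at ha hb <;> omega
  simp only [IsSide, Finset.mem_preimage, Prod.map, Finset.mem_erase, hedge, ne_eq, hne, hne',
    not_false_eq_true, true_and]

section SuccAbove

variable {m : ℕ} (T : Triangulation (m + 1)) (T' : Triangulation m) {u : Fin (m + 1)}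
  (hside : ∀ a b : Fin m, a < b → (T'.IsSide a b ↔ T.IsSide (u.succAbove a) (u.succAbove b)))
include hside

lemma card_filter_cells_succAbove (w : Fin m) :
    ((T.cells.filter fun t => t.1 = u.succAbove w ∨ t.2.1 = u.succAbove w ∨
      t.2.2 = u.succAbove w).filter fun t => ¬ (t.1 = u ∨ t.2.1 = u ∨ t.2.2 = u)).card =
      T'.quidFin w := by
  set s := u.succAbove
  have hs : StrictMono s := Fin.strictMono_succAbove u
  have hinj : Function.Injective (Prod.map s (Prod.map s s)) :=
    hs.injective.prodMap (hs.injective.prodMap hs.injective)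
  rw [quidFin, ← Finset.card_image_of_injective _ hinj]
  congr 1
  ext ⟨t₁, t₂, t₃⟩
  simp only [Finset.mem_filter, Finset.mem_image, not_or]
  constructor
  · rintro ⟨⟨ht, hv⟩, hu₁, hu₂, hu₃⟩
    obtain ⟨a₁, rfl⟩ := Fin.exists_succAbove_eq hu₁
    obtain ⟨a₂, rfl⟩ := Fin.exists_succAbove_eq hu₂
    obtain ⟨a₃, rfl⟩ := Fin.exists_succAbove_eq hu₃
    refine ⟨(a₁, a₂, a₃), ⟨(T.mem_cells_map_iff T' hs hside _).1 ht, ?_⟩, rfl⟩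
    simpa [s, Fin.succAbove_right_inj] using hv
  · rintro ⟨⟨a₁, a₂, a₃⟩, ⟨ht', hw⟩, h⟩
    simp only [Prod.map, Prod.mk.injEq] at h
    obtain ⟨rfl, rfl, rfl⟩ := h
    refine ⟨⟨(T.mem_cells_map_iff T' hs hside (a₁, a₂, a₃)).2 ht', ?_⟩, ?_⟩
    · simpa [s, Fin.succAbove_right_inj] using hw
    · simp [s]

lemma quidFin_succAbove {x y : Fin (m + 1)} (hx : x.val + 1 = u.val) (hy : y.val = u.val + 1)
    (hear : T.cells.filter (fun t => t.1 = u ∨ t.2.1 = u ∨ t.2.2 = u) = {(x, u, y)})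
    (w : Fin m) :
    T.quidFin (u.succAbove w) =
      T'.quidFin w + if w.val + 1 = u.val ∨ w.val = u.val then 1 else 0 := by
  have hcond : (x = u.succAbove w ∨ u = u.succAbove w ∨ y = u.succAbove w) ↔
      (w.val + 1 = u.val ∨ w.val = u.val) := by
    have := val_succAbove u w
    simp only [Fin.ext_iff]
    split_ifs at this <;> omega
  rw [quidFin, ← Finset.card_filter_add_card_filter_not
    (p := fun t => t.1 = u ∨ t.2.1 = u ∨ t.2.2 = u), add_comm,
    T.card_filter_cells_succAbove T' hside, Finset.filter_comm, hear, Finset.filter_singleton]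
  simp only [hcond]
  split_ifs <;> simp

end SuccAbove

lemma quidFin_of_three (T : Triangulation 3) (v : Fin 3) : T.quidFin v = 1 := by
  have hcells : T.cells = {(0, 1, 2)} := by
    ext ⟨a, b, c⟩
    simp only [mem_cells_iff, Finset.mem_singleton, Prod.mk.injEq]
    constructor
    · rintro ⟨h₁, h₂, -⟩
      revert a b c
      decide
    · rintro ⟨rfl, rfl, rfl⟩
      refine ⟨by decide, by decide, Or.inl ?_, Or.inl ?_, Or.inl ?_⟩ <;> simp [isEdge]
  unfold quidFin
  rw [hcells, Finset.filter_singleton, if_pos (by fin_cases v <;> simp), Finset.card_singleton]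

lemma quid_val {n : ℕ} [NeZero n] (T : Triangulation n) (v : Fin n) :
    T.quid v = T.quidFin v := by
  show T.quidFin (vmap n v) = _
  congr 1
  apply Fin.ext
  simp [vmap, Int.emod_eq_of_lt]

lemma quid_periodic {n : ℕ} [NeZero n] (T : Triangulation n) : Function.Periodic T.quid n :=
  fun u => by simp [quid, vmap]

end Triangulation

theorem MprodZ_eq_neg_one_of_quidFin :
    ∀ {n : ℕ} (T : Triangulation n) {c : ℤ → ℤ}, 3 ≤ n →
      (∀ v : Fin n, c v = T.quidFin v) → MprodZ c 0 n = -1 := by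
  intro n
  induction n using Nat.strong_induction_on with
  | _ n IH =>
  intro T c hn hc
  rcases (by omega : n = 3 ∨ 4 ≤ n) with rfl | hn₄
  · have h₁ : ∀ v : Fin 3, c v = 1 := fun v => by rw [hc, T.quidFin_of_three]; rfl
    rw [MprodZ_three, zero_add, zero_add, show c 0 = 1 from h₁ 0, show c 1 = 1 from h₁ 1,
      show c 2 = 1 from h₁ 2]
    exact Mmat_one_mul_Mmat_one_mul_Mmat_one
  obtain ⟨m, rfl⟩ : ∃ m, n = m + 1 := ⟨n - 1, by omega⟩
  obtain ⟨u, e, he, he₁, he₂, hfree⟩ := T.exists_ear hn₄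
  obtain ⟨T', hT'⟩ := T.exists_isSide_succAbove_iff he he₁ he₂ hfree
  have hear := T.filter_cells_eq_singleton_of_ear he he₁ he₂ hfree
  have he₂n := e.2.isLt
  have : NeZero m := ⟨by omega⟩
  rw [MprodZ_succ_eq_of_succAbove (c' := fun z => T'.quid z) (u := u) (by omega) (by omega)]
  · exact IH m (by omega) T' (by omega) fun v => by rw [T'.quid_val]
  · rw [hc, Triangulation.quidFin, hear, Finset.card_singleton, Nat.cast_one]
  · intro w
    rw [hc, T.quidFin_succAbove T' hT' he₁ he₂ hear, T'.quid_val]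
    push_cast
    rfl

/-- For the quiddity `(c_u)` of a triangulation of a convex `n`-gon, the product
`M(c_i, c_{i+1}, …, c_{i+n-1})` is `-I`. -/
theorem Mprod_quiddity_period (n : ℕ) (hn : 3 ≤ n) [NeZero n] (T : Triangulation n)
    (i : ℤ) :
    MprodZ (fun u => (T.quid u : ℤ)) i n = -(1 : Matrix (Fin 2) (Fin 2) ℤ) :=
  MprodZ_eq_neg_one_of_periodic (T.quid_periodic.comp _)
    (MprodZ_eq_neg_one_of_quidFin T hn fun v => congrArg Nat.cast (T.quid_val v)) i

end CCFPaper
end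

section
/- For integers a, b ≥ 2 and the q-deformed matrices M_q(a) = [[[a]_q, −q^{a−1}],[1, 0]] (where [a]_q = 1 + q + … + q^{a−1}), one has the identity M_q(a)·M_q(1)·M_q(b) = q·M_q(a−1)·M_q(b−1) as matrices over ℤ[q]. -/
open Polynomial

open scoped Classical

namespace CCFPaper

lemma qInt_one : qInt 1 = 1 := by
  simp [qInt]

lemma qInt_succ (n : ℕ) : qInt (n + 1) = qInt n + X ^ n :=
  Finset.sum_range_succ _ n

lemma qInt_succ' (n : ℕ) : qInt (n + 1) = 1 + X * qInt n := by
  simp only [qInt, Finset.sum_range_succ', Finset.mul_sum, pow_succ', pow_zero, add_comm]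

lemma Mq_succ_mul_Mq_one (a : ℕ) : Mq (a + 1) * Mq 1 = !![qInt a, -qInt (a + 1); 1, -1] := by
  simp [Mq, qInt_one, qInt_succ a]

/-- For `a, b ≥ 2`, one has `M_q(a) M_q(1) M_q(b) = q · M_q(a-1) M_q(b-1)`. -/
theorem Mq_one_middle (a b : ℕ) (ha : 2 ≤ a) (hb : 2 ≤ b) :
    Mq a * Mq 1 * Mq b = (X : Polynomial ℤ) • (Mq (a - 1) * Mq (b - 1)) := by
  obtain ⟨a, rfl⟩ : ∃ a', a = a' + 1 + 1 := ⟨a - 2, by omega⟩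
  obtain ⟨b, rfl⟩ : ∃ b', b = b' + 1 + 1 := ⟨b - 2, by omega⟩
  rw [Mq_succ_mul_Mq_one]
  simp only [Mq, Matrix.mul_fin_two, Matrix.smul_of, Matrix.smul_cons, Matrix.smul_empty,
    smul_eq_mul, Nat.add_sub_cancel, EmbeddingLike.apply_eq_iff_eq, Matrix.vecCons_inj, and_true]
  refine ⟨⟨?_, by ring⟩, ?_, by ring⟩
  · linear_combination qInt (a + 1) * qInt_succ' (b + 1) - qInt_succ (a + 1)
  · linear_combination qInt_succ' (b + 1)

end CCFPaper
end
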